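/- arXiv:1309.6297 — 3 statements merged into one kernel-verified Lean document; each statement's English description precedes it below -/
import Mathlib

section
/- Let T be the and-or explanation tree for p w.r.t. Π and X, and define the weight W_T on vertices by: W_T(v) = min over children c of W_T(c) if v is an atom vertex, and W_T(v) = 1 + sum over children c of W_T(c) if v is a rule vertex (leaves, being rule vertices, have weight 1). Then for every explanation tree T' in T (a subtree containing the root where each atom vertex keeps exactly one child and each rule vertex keeps all its children), the number of rule vertices of T' is at least W_T(root), and there exists an explanation tree achieving exactly W_T(root) rule vertices. -/
/-- A ground normal rule: head atom, positive body atoms, negative body atoms. -/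
structure Rule (α : Type) where
  head : α
  pos : Finset α
  neg : Finset α

/-- Finite rose trees with vertex labels in `L`; a vertex of a tree is identified
with the subtree hanging from it. -/
inductive RTree (L : Type) : Type
  | node : L → List (RTree L) → RTree L

namespace RTree

def label {L : Type} : RTree L → L
  | node l _ => l

def children {L : Type} : RTree L → List (RTree L)
  | node _ cs => cs

end RTree

/-- Rule `r` supports atom `p` using atoms in `X` but not in `Z`:
`H(r) = p`, `B⁺(r) ⊆ X \ Z` and `B⁻(r) ∩ X = ∅`. -/
def Supports {α : Type} (X Z : Set α) (r : Rule α) (p : α) : Prop :=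
  r.head = p ∧ ↑r.pos ⊆ X \ Z ∧ ∀ a ∈ r.neg, a ∉ X

/-- `IsAOTNode P X Z t`: `t` is (a node of) the and-or explanation tree w.r.t.
program `P` and answer set `X`, where `Z` is the set of atoms labeling the
ancestor atom vertices.  An atom vertex labeled `p` has one rule-vertex child for
each rule of `P` supporting `p` using atoms in `X` but not in `insert p Z` (and
only such children), and has at least one child (so that every leaf is a rule
vertex); a rule vertex labeled `r` has one atom-vertex child for each atom of
`B⁺(r)` (and only such children). -/
inductive IsAOTNode {α : Type} (P : Set (Rule α)) (X : Set α) :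
    Set α → RTree (α ⊕ Rule α) → Prop
  | atom {Z : Set α} {p : α} {cs : List (RTree (α ⊕ Rule α))}
      (hp : p ∈ X) (hne : cs ≠ [])
      (hcomplete : ∀ r ∈ P, Supports X (insert p Z) r p →
        ∃ c ∈ cs, RTree.label c = Sum.inr r)
      (hsound : ∀ c ∈ cs,
        ∃ r ∈ P, Supports X (insert p Z) r p ∧ RTree.label c = Sum.inr r)
      (hrec : ∀ c ∈ cs, IsAOTNode P X (insert p Z) c) :
      IsAOTNode P X Z (.node (.inl p) cs)
  | rule {Z : Set α} {r : Rule α} {cs : List (RTree (α ⊕ Rule α))}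
      (hcomplete : ∀ a ∈ r.pos, ∃ c ∈ cs, RTree.label c = Sum.inl a)
      (hsound : ∀ c ∈ cs, ∃ a ∈ r.pos, RTree.label c = Sum.inl a)
      (hrec : ∀ c ∈ cs, IsAOTNode P X Z c) :
      IsAOTNode P X Z (.node (.inr r) cs)

/-- Minimum of a list of naturals (0 for the empty list; only used on nonempty
lists of children weights). -/
def listMin : List ℕ → ℕ
  | [] => 0
  | a :: l => l.foldr min a

/-- The weight function `W_T`: an atom (or-) vertex gets the minimum of its
children's weights, a rule (and-) vertex gets `1` plus the sum of its children's
weights (so leaves, being rule vertices, have weight 1). -/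
def weightT {α ρ : Type} : RTree (α ⊕ ρ) → ℕ
  | .node (.inl _) cs => listMin (cs.attach.map (fun c => weightT c.1))
  | .node (.inr _) cs => 1 + (cs.attach.map (fun c => weightT c.1)).sum
decreasing_by
  all_goals (have := List.sizeOf_lt_of_mem c.2; simp only [RTree.node.sizeOf_spec]; omega)

/-- The number of rule (and-) vertices of a tree. -/
def ruleCount {α ρ : Type} : RTree (α ⊕ ρ) → ℕ
  | .node (.inl _) cs => (cs.attach.map (fun c => ruleCount c.1)).sum
  | .node (.inr _) cs => 1 + (cs.attach.map (fun c => ruleCount c.1)).sum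
decreasing_by
  all_goals (have := List.sizeOf_lt_of_mem c.2; simp only [RTree.node.sizeOf_spec]; omega)

/-- `SolOf S T`: `S` is an explanation tree (solution subtree) in the and-or tree
`T`: it has the same root label, each atom (or-) vertex of `S` keeps exactly one
of the children it has in `T`, and each rule (and-) vertex keeps all of its
children. -/
inductive SolOf {α ρ : Type} : RTree (α ⊕ ρ) → RTree (α ⊕ ρ) → Prop
  | atom {a : α} {cs : List (RTree (α ⊕ ρ))} {c s : RTree (α ⊕ ρ)} :
      c ∈ cs → SolOf s c → SolOf (.node (.inl a) [s]) (.node (.inl a) cs)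
  | rule {r : ρ} {cs ss : List (RTree (α ⊕ ρ))} :
      List.Forall₂ SolOf ss cs → SolOf (.node (.inr r) ss) (.node (.inr r) cs)

/-! An explanation tree selects one child at every atom vertex and keeps all children at rule
vertices, so by induction its rule count dominates the min/sum recursion defining `W_T`; selecting
at every atom vertex a child of minimal weight attains it. -/

theorem List.exists_forall₂_of_forall_exists {β γ : Type*} {R : β → γ → Prop} :
    ∀ {l : List γ}, (∀ c ∈ l, ∃ b, R b c) → ∃ l', List.Forall₂ R l' l
  | [], _ => ⟨[], .nil⟩
  | c :: l, h => by
    obtain ⟨b, hb⟩ := h c List.mem_cons_self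
    obtain ⟨l', hl'⟩ :=
      exists_forall₂_of_forall_exists fun x hx => h x (List.mem_cons_of_mem c hx)
    exact ⟨b :: l', .cons hb hl'⟩

theorem List.Forall₂.map_eq_map {β γ δ : Type*} {f : β → δ} {g : γ → δ}
    {l₁ : List β} {l₂ : List γ}
    (h : List.Forall₂ (fun b c => f b = g c) l₁ l₂) : l₁.map f = l₂.map g := by
  rw [← List.forall₂_eq_eq_eq, List.forall₂_map_left_iff, List.forall₂_map_right_iff]
  exact h

theorem List.Forall₂.mem_right_and {β γ : Type*} {R : β → γ → Prop}
    {l₁ : List β} {l₂ : List γ}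
    (h : List.Forall₂ R l₁ l₂) : List.Forall₂ (fun b c => c ∈ l₂ ∧ R b c) l₁ l₂ :=
  List.forall₂_iff_zip.mpr
    ⟨h.length_eq, fun hbc => ⟨(List.of_mem_zip hbc).2, List.forall₂_zip h hbc⟩⟩

theorem listMin_eq_min : ∀ {l : List ℕ} (hl : l ≠ []), listMin l = l.min hl
  | _ :: _, _ => List.foldl_eq_foldr.symm

theorem listMin_le_of_mem {l : List ℕ} {x : ℕ} (hx : x ∈ l) : listMin l ≤ x :=
  listMin_eq_min (List.ne_nil_of_mem hx) ▸ List.min_le_of_mem hx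

theorem listMin_mem {l : List ℕ} (hl : l ≠ []) : listMin l ∈ l :=
  listMin_eq_min hl ▸ List.min_mem hl

section Counting

variable {α ρ : Type}

@[simp]
theorem weightT_node_inl (a : α) (cs : List (RTree (α ⊕ ρ))) :
    weightT (.node (.inl a) cs) = listMin (cs.map weightT) := by
  rw [weightT, List.map_attach_eq_pmap, List.pmap_eq_map]

@[simp]
theorem weightT_node_inr (r : ρ) (cs : List (RTree (α ⊕ ρ))) :
    weightT (.node (.inr r) cs) = 1 + (cs.map weightT).sum := by
  rw [weightT, List.map_attach_eq_pmap, List.pmap_eq_map]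

@[simp]
theorem ruleCount_node_inl (a : α) (cs : List (RTree (α ⊕ ρ))) :
    ruleCount (.node (.inl a) cs) = (cs.map ruleCount).sum := by
  rw [ruleCount, List.map_attach_eq_pmap, List.pmap_eq_map]

@[simp]
theorem ruleCount_node_inr (r : ρ) (cs : List (RTree (α ⊕ ρ))) :
    ruleCount (.node (.inr r) cs) = 1 + (cs.map ruleCount).sum := by
  rw [ruleCount, List.map_attach_eq_pmap, List.pmap_eq_map]

theorem weightT_le_ruleCount_of_solOf :
    ∀ {S T : RTree (α ⊕ ρ)}, SolOf S T → weightT T ≤ ruleCount S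
  | _, .node _ cs, .atom hc hs => by
    simpa using (listMin_le_of_mem (List.mem_map_of_mem hc)).trans
      (weightT_le_ruleCount_of_solOf hs)
  | _, .node _ cs, .rule (ss := ss) hss => by
    have hle : List.Forall₂ (· ≤ ·) (cs.map weightT) (ss.map ruleCount) := by
      rw [List.forall₂_map_left_iff, List.forall₂_map_right_iff]
      exact .flip (hss.mem_right_and.imp fun _ _ ⟨_, h⟩ => weightT_le_ruleCount_of_solOf h)
    simpa using hle.sum_le_sum
termination_by _ T => sizeOf T
decreasing_by
  all_goals
    have := List.sizeOf_lt_of_mem ‹_ ∈ cs›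
    simp only [RTree.node.sizeOf_spec]
    omega

end Counting

theorem IsAOTNode.exists_solOf_ruleCount_eq_weightT {α : Type} {P : Set (Rule α)} {X Z : Set α}
    {T : RTree (α ⊕ Rule α)} (hT : IsAOTNode P X Z T) :
    ∃ S, SolOf S T ∧ ruleCount S = weightT T := by
  induction hT with
  | @atom _ p cs _ hne _ _ _ ih =>
    have hne' : cs.map weightT ≠ [] := List.map_eq_nil_iff.not.mpr hne
    obtain ⟨c, hc, hcmin⟩ := List.mem_map.mp (listMin_mem hne')
    obtain ⟨s, hs, hsc⟩ := ih c hc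
    exact ⟨.node (.inl p) [s], .atom hc hs, by simp [hsc, hcmin]⟩
  | @rule _ r cs _ _ _ ih =>
    obtain ⟨ss, hss⟩ := List.exists_forall₂_of_forall_exists ih
    refine ⟨.node (.inr r) ss, .rule (hss.imp fun _ _ h => h.1), ?_⟩
    simp [(hss.imp fun _ _ h => h.2).map_eq_map]

theorem weight_is_min_ruleCount_general {α : Type} (P : Set (Rule α)) (X : Set α)
    (T : RTree (α ⊕ Rule α)) (hT : IsAOTNode P X ∅ T) :
    (∀ S, SolOf S T → weightT T ≤ ruleCount S) ∧
    (∃ S, SolOf S T ∧ ruleCount S = weightT T) :=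
  ⟨fun _ => weightT_le_ruleCount_of_solOf, hT.exists_solOf_ruleCount_eq_weightT⟩

/-- Every explanation tree in the and-or explanation tree `T` has at least
`W_T(root)` rule vertices, and some explanation tree achieves exactly
`W_T(root)` rule vertices. -/
theorem weight_is_min_ruleCount {α : Type} (P : Set (Rule α)) (X : Set α) (p : α)
    (T : RTree (α ⊕ Rule α)) (hT : IsAOTNode P X ∅ T)
    (hroot : RTree.label T = Sum.inl p) :
    (∀ S, SolOf S T → weightT T ≤ ruleCount S) ∧
    (∃ S, SolOf S T ∧ ruleCount S = weightT T) :=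
  weight_is_min_ruleCount_general P X T hT
end

section
/- For a ground normal program Π and an answer set X, the atoms of the well-founded model are correctly classified by X: W⁺ ⊆ X and W⁻ ∩ X = ∅, where ⟨W⁺, W⁻⟩ is the well-founded model of Π (with W⁺ = K_j and W⁻ = A \ U_j for the stabilization index j of the alternating fixpoint iteration). -/
/-- `Y` is a model of the reduct `Π^X`. -/
def IsModelOfReduct {α : Type} (P : Set (Rule α)) (X Y : Set α) : Prop :=
  ∀ r ∈ P, (∀ a ∈ r.neg, a ∉ X) → ↑r.pos ⊆ Y → r.head ∈ Y

/-- `X` is an answer set of `Π`: a subset-minimal model of the reduct `Π^X`. -/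
def IsAnswerSet {α : Type} (P : Set (Rule α)) (X : Set α) : Prop :=
  IsModelOfReduct P X X ∧ ∀ Y ⊆ X, IsModelOfReduct P X Y → Y = X

/-- The immediate consequence operator with fixed falsity set `V`:
`T_{Π,V}(S) = {H(r) | r ∈ Π, B⁺(r) ⊆ S, B⁻(r) ∩ V = ∅}`, bundled as a monotone
operator on sets of atoms. -/
def Tcons {α : Type} (P : Set (Rule α)) (V : Set α) : Set α →o Set α where
  toFun S := {a | ∃ r ∈ P, r.head = a ∧ ↑r.pos ⊆ S ∧ ∀ b ∈ r.neg, b ∉ V}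
  monotone' := by
    intro S S' h a ha
    obtain ⟨r, hr, hh, hpos, hneg⟩ := ha
    exact ⟨r, hr, hh, hpos.trans h, hneg⟩

/-- The positive part `Π⁺` of a program: the rules with empty negative body. -/
def Pplus {α : Type} (P : Set (Rule α)) : Set (Rule α) := {r ∈ P | r.neg = ∅}

/-- The `K`-sequence of the alternating (well-founded) fixpoint iteration:
`K 0 = lfp (T_{Π⁺})` and `K (i+1) = lfp (T_{Π,U i})` where
`U i = lfp (T_{Π,K i})`. -/
def Kseq {α : Type} (P : Set (Rule α)) : ℕ → Set α
  | 0 => OrderHom.lfp (Tcons (Pplus P) ∅)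
  | i + 1 => OrderHom.lfp (Tcons P (OrderHom.lfp (Tcons P (Kseq P i))))

/-- The `U`-sequence: `U i = lfp (T_{Π,K i})`. -/
def Useq {α : Type} (P : Set (Rule α)) (i : ℕ) : Set α :=
  OrderHom.lfp (Tcons P (Kseq P i))

lemma Tcons_anti {α : Type} (P : Set (Rule α)) {V V' : Set α} (h : V ⊆ V') :
    Tcons P V' ≤ Tcons P V := by
  intro S a ⟨r, hr, hh, hpos, hneg⟩
  exact ⟨r, hr, hh, hpos, fun b hb hbV => hneg b hb (h hbV)⟩

lemma lfp_eq_answerSet {α : Type} {P : Set (Rule α)} {X : Set α}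
    (hX : IsAnswerSet P X) : OrderHom.lfp (Tcons P X) = X := by
  set L := OrderHom.lfp (Tcons P X) with hL
  have hLX : L ⊆ X := by
    apply OrderHom.lfp_le
    intro a ⟨r, hr, hh, hpos, hneg⟩
    exact hh ▸ hX.1 r hr hneg hpos
  refine hX.2 L hLX ?_
  intro r hr hneg hpos
  have : r.head ∈ Tcons P X L := ⟨r, hr, rfl, hpos, hneg⟩
  rwa [hL, OrderHom.map_lfp] at this

lemma Kseq_subset {α : Type} {P : Set (Rule α)} {X : Set α}
    (hX : IsAnswerSet P X) : ∀ i, Kseq P i ⊆ X ∧ X ⊆ Useq P i := by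
  have keyK : ∀ V : Set α, X ⊆ V → OrderHom.lfp (Tcons P V) ⊆ X := fun V hV => by
    rw [← lfp_eq_answerSet hX]
    exact OrderHom.lfp.monotone (Tcons_anti P hV)
  have keyU : ∀ V : Set α, V ⊆ X → X ⊆ OrderHom.lfp (Tcons P V) := fun V hV => by
    conv_lhs => rw [← lfp_eq_answerSet hX]
    exact OrderHom.lfp.monotone (Tcons_anti P hV)
  intro i
  induction i with
  | zero =>
    constructor
    · apply OrderHom.lfp_le
      intro a ⟨r, hr, hh, hpos, _⟩
      refine hh ▸ hX.1 r hr.1 (fun b hb _ => ?_) hpos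
      simp [hr.2] at hb
    · exact keyU _ (by
        apply OrderHom.lfp_le
        intro a ⟨r, hr, hh, hpos, _⟩
        refine hh ▸ hX.1 r hr.1 (fun b hb _ => ?_) hpos
        simp [hr.2] at hb)
  | succ i ih =>
    have hK : Kseq P (i + 1) ⊆ X := keyK _ ih.2
    exact ⟨hK, keyU _ hK⟩

/-- The well-founded model correctly classifies the atoms of every answer set:
`W⁺ ⊆ X` and `W⁻ ∩ X = ∅`, where `W⁺ = K j` and `W⁻ = A \ U j` for a
stabilization index `j` of the alternating fixpoint iteration. -/
theorem wellFoundedModel_approximates_answerSet {α : Type} [Fintype α]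
    (P : Set (Rule α)) (X : Set α) (hX : IsAnswerSet P X) (j : ℕ)
    (hj : Kseq P j = Kseq P (j + 1) ∧ Useq P j = Useq P (j + 1)) :
    Kseq P j ⊆ X ∧ (Set.univ \ Useq P j) ∩ X = ∅ := by
  obtain ⟨hK, hU⟩ := Kseq_subset hX j
  refine ⟨hK, Set.eq_empty_iff_forall_notMem.2 ?_⟩
  rintro a ⟨⟨-, ha⟩, haX⟩
  exact ha (hU haX)
end

section
/- Let Π be a ground normal program and X an answer set. If S is an explanation for p ∈ X (the rule-vertex tree obtained from an explanation tree by contracting atom vertices), then the set of rules labeling the vertices of S, restricted to the reduct Π^X (i.e., {H(r) ← B⁺(r) | r labels a vertex of S}), is itself a program whose least model contains p. In other words, the rules appearing in an explanation suffice to derive p from the facts in the explanation's leaves. -/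
namespace RTree

/-- The list of all vertices (subtree occurrences) of a tree. -/
def occs {L : Type} : RTree L → List (RTree L)
  | node l cs => node l cs :: (cs.attach.map (fun c => occs c.1)).flatten
decreasing_by
  have := List.sizeOf_lt_of_mem c.2
  simp only [RTree.node.sizeOf_spec]; omega

end RTree

/-- The immediate consequence operator of the positive program
`{H(r) ← B⁺(r) | r ∈ Q}` (negative bodies discarded, as in the reduct `Π^X`). -/
def TconsPos {α : Type} (Q : Set (Rule α)) : Set α →o Set α where
  toFun S := {a | ∃ r ∈ Q, r.head = a ∧ ↑r.pos ⊆ S}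
  monotone' := by
    intro S S' h a ha
    obtain ⟨r, hr, hh, hpos⟩ := ha
    exact ⟨r, hr, hh, hpos.trans h⟩

/- Induction on the tree: each positive body atom of a vertex's rule is the head of a child
rule, which lies in the least model by induction, so the rule fires on the least model; since
that is a fixed point of `TconsPos`, the head lies in it too. -/

namespace RTree

variable {L : Type}

theorem self_mem_occs (t : RTree L) : t ∈ occs t := by
  cases t
  rw [occs]
  exact List.mem_cons_self

theorem occs_subset_of_mem_children {t c : RTree L} (hc : c ∈ children t) :
    occs c ⊆ occs t := by
  cases t with
  | node l cs =>
    intro u hu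
    rw [occs]
    exact List.mem_cons_of_mem _
      (List.mem_flatten_of_mem (List.mem_map.2 ⟨⟨c, hc⟩, List.mem_attach _ _, rfl⟩) hu)

end RTree

theorem head_mem_lfp_TconsPos {α : Type} {Q : Set (Rule α)} {r : Rule α} (hr : r ∈ Q)
    (hpos : ↑r.pos ⊆ OrderHom.lfp (TconsPos Q)) : r.head ∈ OrderHom.lfp (TconsPos Q) := by
  rw [← OrderHom.map_lfp]
  exact ⟨r, hr, rfl, hpos⟩

theorem RTree.head_label_mem_lfp_TconsPos {α : Type} {Q : Set (Rule α)} (t : RTree (Rule α))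
    (hQ : ∀ u ∈ t.occs, u.label ∈ Q)
    (hpos : ∀ u ∈ t.occs, ∀ a ∈ u.label.pos, ∃ c ∈ u.children, c.label.head = a) :
    t.label.head ∈ OrderHom.lfp (TconsPos Q) := by
  induction t using RTree.occs.induct with
  | _ l cs ih =>
    refine head_mem_lfp_TconsPos (hQ _ (self_mem_occs _)) fun a ha => ?_
    obtain ⟨c, hc, rfl⟩ := hpos _ (self_mem_occs _) a ha
    have hsub := occs_subset_of_mem_children hc
    exact ih ⟨c, hc⟩ (fun u hu => hQ u (hsub hu)) (fun u hu => hpos u (hsub hu))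

theorem explanation_rules_derive_root_general {α : Type} (p : α)
    (S : RTree (Rule α))
    (hroot : (RTree.label S).head = p)
    (hchildren : ∀ t ∈ RTree.occs S, ∀ a : α,
      a ∈ (RTree.label t).pos ↔ ∃ c ∈ RTree.children t, (RTree.label c).head = a) :
    p ∈ OrderHom.lfp (TconsPos {r | ∃ t ∈ RTree.occs S, RTree.label t = r}) :=
  hroot ▸ S.head_label_mem_lfp_TconsPos (fun t ht => ⟨t, ht, rfl⟩)
    fun t ht a ha => (hchildren t ht a).1 ha

/-- The rules appearing in an explanation suffice to derive its root atom: if `S`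
is an explanation for `p ∈ X` (a tree of rule vertices in which each rule's
positive body atoms are exactly the heads of its children rules, the rules come
from `Π` and pass the reduct `Π^X`, and the root rule's head is `p`), then `p`
belongs to the least model — the least fixed point of the immediate consequence
operator — of the positive program `{H(r) ← B⁺(r)}` over the rules labeling the
vertices of `S`. -/
theorem explanation_rules_derive_root {α : Type} (P : Set (Rule α)) (X : Set α)
    (hX : IsAnswerSet P X) (p : α) (hp : p ∈ X)
    (S : RTree (Rule α))
    (hroot : (RTree.label S).head = p)
    (hmem : ∀ t ∈ RTree.occs S, RTree.label t ∈ P)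
    (hneg : ∀ t ∈ RTree.occs S, ∀ a ∈ (RTree.label t).neg, a ∉ X)
    (hchildren : ∀ t ∈ RTree.occs S, ∀ a : α,
      a ∈ (RTree.label t).pos ↔ ∃ c ∈ RTree.children t, (RTree.label c).head = a) :
    p ∈ OrderHom.lfp (TconsPos {r | ∃ t ∈ RTree.occs S, RTree.label t = r}) :=
  explanation_rules_derive_root_general p S hroot hchildren
end
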